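/- arXiv:2402.04213 — 7 statements merged into one kernel-verified Lean document; each statement's English description precedes it below -/
import Mathlib

section
/- Let N ⪰ 0 on H_A ⊗ H_B with Tr_B N = id_A. If max over W ⪰ 0 with Tr_A W = id_B of Tr(NW) equals 1, then N = id_A ⊗ ϖ where ϖ = (dim H_A)⁻¹ Tr_A N. (Faithfulness of the signalling power.) -/
set_option linter.unusedSectionVars false
open Matrix Kronecker BigOperators ComplexOrder
noncomputable section

/-- Partial trace over the first tensor factor. -/
def ptraceA {A B : Type*} [Fintype A] (W : Matrix (A × B) (A × B) ℂ) : Matrix B B ℂ :=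
  Matrix.of fun b b' => ∑ a : A, W (a, b) (a, b')

/-- Partial trace over the second tensor factor. -/
def ptraceB {A B : Type*} [Fintype B] (W : Matrix (A × B) (A × B) ℂ) : Matrix A A ℂ :=
  Matrix.of fun a a' => ∑ b : B, W (a, b) (a', b)

variable {A B : Type*} [Fintype A] [Fintype B] [DecidableEq A] [DecidableEq B]

lemma ptraceA_add (X Y : Matrix (A × B) (A × B) ℂ) :
    ptraceA (X + Y) = ptraceA X + ptraceA Y := by
  ext b b'; simp [ptraceA, Finset.sum_add_distrib]

lemma ptraceA_smul (r : ℂ) (X : Matrix (A × B) (A × B) ℂ) :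
    ptraceA (r • X) = r • ptraceA X := by
  ext b b'; simp [ptraceA, Finset.mul_sum]

lemma ptraceA_sub (X Y : Matrix (A × B) (A × B) ℂ) :
    ptraceA (X - Y) = ptraceA X - ptraceA Y := by
  ext b b'; simp [ptraceA, Finset.sum_sub_distrib]

lemma ptraceA_one : ptraceA (1 : Matrix (A × B) (A × B) ℂ) = (Fintype.card A : ℂ) • 1 := by
  ext b b'
  by_cases h : b = b' <;>
    simp [ptraceA, Matrix.one_apply, Prod.ext_iff, h]

lemma ptraceA_kron (P : Matrix B B ℂ) :
    ptraceA ((1 : Matrix A A ℂ) ⊗ₖ P) = (Fintype.card A : ℂ) • P := by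
  ext b b'
  simp [ptraceA, Matrix.one_apply, mul_comm, Finset.mul_sum]

lemma trace_kron_one_mul (P : Matrix B B ℂ) (M : Matrix (A × B) (A × B) ℂ) :
    (((1 : Matrix A A ℂ) ⊗ₖ P) * M).trace = (P * ptraceA M).trace := by
  simp only [Matrix.trace, Matrix.diag, Matrix.mul_apply, ptraceA, Matrix.of_apply,
    Fintype.sum_prod_type, kroneckerMap_apply, Matrix.one_apply]
  simp [Finset.mul_sum, ite_mul]
  rw [Finset.sum_comm]
  congr 1; ext b
  rw [Finset.sum_comm]

lemma trace_eq_ptraceB (M : Matrix (A × B) (A × B) ℂ) : M.trace = (ptraceB M).trace := by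
  simp [Matrix.trace, Matrix.diag, ptraceB, Fintype.sum_prod_type]

lemma ptraceA_conjTranspose (M : Matrix (A × B) (A × B) ℂ) :
    (ptraceA M)ᴴ = ptraceA Mᴴ := by
  ext b b'; simp [ptraceA, Matrix.conjTranspose_apply]

end

/-- Faithfulness of the signalling power: if the maximum of `Tr(NW)` over feasible `W`
equals `1`, then `N = id_A ⊗ ϖ` with `ϖ = (dim H_A)⁻¹ Tr_A N`. -/
theorem stmt1 {A B : Type*} [Fintype A] [Fintype B] [DecidableEq A] [DecidableEq B]
    [Nonempty A] [Nonempty B]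
    (N : Matrix (A × B) (A × B) ℂ) (hpsd : N.PosSemidef) (hch : ptraceB N = 1)
    (hmax : IsGreatest {x : ℝ | ∃ W : Matrix (A × B) (A × B) ℂ,
      W.PosSemidef ∧ ptraceA W = 1 ∧ ((N * W).trace).re = x} 1) :
    N = (1 : Matrix A A ℂ) ⊗ₖ ((Fintype.card A : ℂ)⁻¹ • ptraceA N) := by
  classical
  have hcA : (0:ℝ) < (Fintype.card A : ℝ) := by
    exact_mod_cast Fintype.card_pos
  have hc0 : (Fintype.card A : ℂ) ≠ 0 := by
    exact_mod_cast Nat.cast_ne_zero.mpr Fintype.card_ne_zero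
  set ϖ : Matrix B B ℂ := (Fintype.card A : ℂ)⁻¹ • ptraceA N with hϖ
  set T : Matrix (A × B) (A × B) ℂ := N - (1 : Matrix A A ℂ) ⊗ₖ ϖ with hTdef
  suffices hT0 : T = 0 by
    have := sub_eq_zero.mp hT0
    rw [this]
  -- Hermitian facts
  have hNH : N.IsHermitian := hpsd.1
  have hϖH : ϖ.IsHermitian := by
    show ϖᴴ = ϖ
    rw [hϖ, Matrix.conjTranspose_smul, ptraceA_conjTranspose, hNH.eq]
    congr 1
    simp
  have hkH : ((1 : Matrix A A ℂ) ⊗ₖ ϖ).IsHermitian := by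
    show _ᴴ = _
    ext ⟨a, b⟩ ⟨a', b'⟩
    have := congrFun (congrFun hϖH.eq b) b'
    simp only [Matrix.conjTranspose_apply] at this ⊢
    simp only [kroneckerMap_apply, Matrix.one_apply, star_mul']
    rw [← this]
    simp only [Matrix.conjTranspose_apply, apply_ite (star : ℂ → ℂ), star_one, star_zero]
    by_cases h : a = a' <;> simp [h, eq_comm, mul_comm]
  have hTH : T.IsHermitian := hNH.sub hkH
  -- partial trace of T vanishes
  have hptT : ptraceA T = 0 := by
    rw [hTdef, ptraceA_sub, ptraceA_kron, hϖ, smul_smul, mul_inv_cancel₀ hc0, one_smul, sub_self]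
  -- trace computations
  have htrN : N.trace = (Fintype.card A : ℂ) := by
    rw [trace_eq_ptraceB, hch, Matrix.trace_one]
  have htrkT : (((1 : Matrix A A ℂ) ⊗ₖ ϖ) * T).trace = 0 := by
    rw [trace_kron_one_mul, hptT, Matrix.mul_zero, Matrix.trace_zero]
  set σ : ℝ := ∑ p : A × B, ∑ q : A × B, Complex.normSq (T p q) with hσ
  have hσnn : 0 ≤ σ :=
    Finset.sum_nonneg fun p _ => Finset.sum_nonneg fun q _ => Complex.normSq_nonneg _
  have hTsym : ∀ p q, T q p = star (T p q) := by
    intro p q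
    conv_lhs => rw [← hTH.eq]
    simp [Matrix.conjTranspose_apply]
  have htrT2 : (T * T).trace = (σ : ℂ) := by
    simp only [Matrix.trace, Matrix.diag, Matrix.mul_apply, hσ]
    push_cast
    refine Finset.sum_comm.trans ?_
    refine Finset.sum_congr rfl fun p _ => Finset.sum_congr rfl fun q _ => ?_
    rw [hTsym p q, Complex.star_def, mul_comm, Complex.mul_conj]
  -- the perturbation
  set Cr : ℝ := (∑ p : A × B, ∑ q : A × B, ‖T p q‖) + 1 with hCr
  have habsnn : 0 ≤ ∑ p : A × B, ∑ q : A × B, ‖T p q‖ :=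
    Finset.sum_nonneg fun p _ => Finset.sum_nonneg fun q _ => norm_nonneg _
  have hCr1 : 1 ≤ Cr := le_add_of_nonneg_left habsnn
  have hCrpos : (0:ℝ) < Cr := lt_of_lt_of_le one_pos hCr1
  set ε : ℝ := ((Fintype.card A : ℝ) * Cr)⁻¹ with hε
  have hεpos : 0 < ε := by positivity
  have hεCr : ε * ((Fintype.card A : ℝ) * Cr) = 1 := by
    rw [hε, inv_mul_cancel₀ (by positivity)]
  set W : Matrix (A × B) (A × B) ℂ := (Fintype.card A : ℂ)⁻¹ • 1 + (ε : ℂ) • T with hW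
  have hWptA : ptraceA W = 1 := by
    rw [hW, ptraceA_add, ptraceA_smul, ptraceA_smul, ptraceA_one, hptT, smul_zero, add_zero,
      smul_smul, inv_mul_cancel₀ hc0, one_smul]
  have hWH : W.IsHermitian := by
    show Wᴴ = W
    rw [hW, Matrix.conjTranspose_add, Matrix.conjTranspose_smul, Matrix.conjTranspose_smul,
      Matrix.conjTranspose_one, hTH.eq]
    congr 1 <;> congr 1 <;> simp
  have hWpsd : W.PosSemidef := by
    refine Matrix.posSemidef_iff_dotProduct_mulVec.mpr ⟨hWH, fun x => ?_⟩
    set S : ℝ := ∑ i : A × B, Complex.normSq (x i) with hS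
    have hSnn : 0 ≤ S := Finset.sum_nonneg fun i _ => Complex.normSq_nonneg _
    have hxx : star x ⬝ᵥ x = (S : ℂ) := by
      simp only [dotProduct, Pi.star_apply, hS]
      push_cast
      refine Finset.sum_congr rfl fun i _ => ?_
      rw [mul_comm, Complex.star_def, Complex.mul_conj]
    set Q : ℂ := star x ⬝ᵥ T *ᵥ x with hQ
    have hQreal : (starRingEnd ℂ) Q = Q := by
      calc (starRingEnd ℂ) Q = star (star (star (T *ᵥ x) ⬝ᵥ x)) := by
            rw [hQ, Matrix.star_dotProduct]; rfl
        _ = star (T *ᵥ x) ⬝ᵥ x := star_star _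
        _ = (star x ᵥ* Tᴴ) ⬝ᵥ x := by rw [Matrix.star_mulVec]
        _ = star x ⬝ᵥ T *ᵥ x := by rw [hTH.eq, ← Matrix.dotProduct_mulVec]
        _ = Q := hQ.symm
    have hQre : ((Q.re : ℝ) : ℂ) = Q := Complex.conj_eq_iff_re.mp hQreal
    have hkey : ∀ p q : A × B, ‖x p‖ * ‖x q‖ ≤ S := by
      intro p q
      have h1 : Complex.normSq (x p) ≤ S :=
        Finset.single_le_sum (fun i _ => Complex.normSq_nonneg (x i)) (Finset.mem_univ p)
      have h2 : Complex.normSq (x q) ≤ S :=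
        Finset.single_le_sum (fun i _ => Complex.normSq_nonneg (x i)) (Finset.mem_univ q)
      rw [← Complex.sq_norm] at h1 h2
      nlinarith [sq_nonneg (‖x p‖ - ‖x q‖)]
    have hQsum : Q = ∑ p : A × B, ∑ q : A × B, star (x p) * (T p q * x q) := by
      rw [hQ]; simp [Matrix.mulVec, dotProduct, Finset.mul_sum]
    have hQb : ‖Q‖ ≤ (Cr - 1) * S := by
      rw [hQsum]
      have step1 : ‖∑ p : A × B, ∑ q : A × B, star (x p) * (T p q * x q)‖ ≤
          ∑ p : A × B, ∑ q : A × B, ‖T p q‖ * S := by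
        refine le_trans (norm_sum_le _ _) (Finset.sum_le_sum fun p _ => ?_)
        refine le_trans (norm_sum_le _ _) (Finset.sum_le_sum fun q _ => ?_)
        rw [norm_mul, norm_mul]
        have hstar : ‖star (x p)‖ = ‖x p‖ := by
          simp
        rw [hstar]
        calc ‖x p‖ * (‖T p q‖ * ‖x q‖)
            = ‖T p q‖ * (‖x p‖ * ‖x q‖) := by ring
          _ ≤ ‖T p q‖ * S :=
              mul_le_mul_of_nonneg_left (hkey p q) (norm_nonneg _)
      have heq : (Cr - 1) * S = ∑ p : A × B, ∑ q : A × B, ‖T p q‖ * S := by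
        rw [hCr, add_sub_cancel_right, Finset.sum_mul]
        exact Finset.sum_congr rfl fun p _ => Finset.sum_mul _ _ _
      exact heq ▸ step1
    have hQreb : |Q.re| ≤ (Cr - 1) * S := le_trans (Complex.abs_re_le_norm Q) hQb
    have hval : star x ⬝ᵥ W *ᵥ x =
        (((Fintype.card A : ℝ)⁻¹ * S + ε * Q.re : ℝ) : ℂ) := by
      rw [hW, Matrix.add_mulVec, Matrix.smul_mulVec, Matrix.smul_mulVec,
        Matrix.one_mulVec, dotProduct_add, dotProduct_smul, dotProduct_smul,
        smul_eq_mul, smul_eq_mul, hxx, ← hQ, ← hQre]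
      push_cast [Complex.ofReal_re]
      ring
    rw [hval]
    rw [Complex.zero_le_real]
    have habs := abs_le.mp hQreb
    have hcc : ε * ((Cr - 1) * S) ≤ (Fintype.card A : ℝ)⁻¹ * S := by
      rw [inv_eq_one_div]
      rw [div_mul_eq_mul_div, le_div_iff₀ hcA]
      nlinarith [hεpos.le, hSnn]
    have h3 := mul_le_mul_of_nonneg_left habs.1 hεpos.le
    rw [mul_neg] at h3
    clear_value Cr ε S Q
    linarith [hcc, h3]
  -- evaluate the objective at W
  have htrNW : ((N * W).trace).re = 1 + ε * σ := by
    have hNT : (N * T).trace = (σ : ℂ) := by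
      have hNeq : N = T + (1 : Matrix A A ℂ) ⊗ₖ ϖ := by rw [hTdef]; abel
      rw [hNeq, Matrix.add_mul, Matrix.trace_add, htrT2, htrkT, add_zero]
    have : (N * W).trace = ((1 + ε * σ : ℝ) : ℂ) := by
      rw [hW, Matrix.mul_add, Matrix.mul_smul, Matrix.mul_smul, Matrix.mul_one,
        Matrix.trace_add, Matrix.trace_smul, Matrix.trace_smul, htrN, hNT,
        smul_eq_mul, smul_eq_mul, inv_mul_cancel₀ hc0]
      push_cast
      ring
    rw [this, Complex.ofReal_re]
  have hmem : (1 + ε * σ : ℝ) ∈ {x : ℝ | ∃ W : Matrix (A × B) (A × B) ℂ,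
      W.PosSemidef ∧ ptraceA W = 1 ∧ ((N * W).trace).re = x} := ⟨W, hWpsd, hWptA, htrNW⟩
  have hle := hmax.2 hmem
  have hσ0 : σ = 0 := by nlinarith [hεpos]
  -- conclude T = 0
  ext p q
  have h0 : ∀ p ∈ (Finset.univ : Finset (A × B)),
      (∑ q : A × B, Complex.normSq (T p q)) = 0 := by
    refine (Finset.sum_eq_zero_iff_of_nonneg
      (fun p _ => Finset.sum_nonneg fun q _ => Complex.normSq_nonneg _)).mp ?_
    exact hσ ▸ hσ0
  have h1 : ∀ q ∈ (Finset.univ : Finset (A × B)), Complex.normSq (T p q) = 0 := by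
    refine (Finset.sum_eq_zero_iff_of_nonneg (fun q _ => Complex.normSq_nonneg _)).mp ?_
    exact h0 p (Finset.mem_univ p)
  have := h1 q (Finset.mem_univ q)
  simpa [Complex.normSq_eq_zero] using this
end

section
/- P(N) relates to S of a complementary operator: with d_A = dim H_A, d = dim(H_A ⊗ H_B), and N̂ = (d_A · id_{AB} − N)/(d − 1), the operator N̂ is a valid channel Choi operator (N̂ ⪰ 0 whenever N ⪯ d_A · id, and Tr_B N̂ = id_A), and P(N) = (d − 1)(2^{S(N̂)} − 1), i.e., 1 − min_W Tr(NW) = (d−1)(max_W Tr(N̂ W) − 1). -/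
open Matrix Kronecker BigOperators ComplexOrder

noncomputable section

lemma psd_smul {n : Type*} [Fintype n] (c : ℝ) (hc : 0 ≤ c)
    {M : Matrix n n ℂ} (hM : M.PosSemidef) : ((c : ℂ) • M).PosSemidef := by
  refine ⟨?_, fun x => ?_⟩
  · unfold Matrix.IsHermitian
    rw [conjTranspose_smul, hM.1.eq]
    norm_num
  · exact (hM.smul (a := (c : ℂ)) (by exact_mod_cast hc)).2 x

lemma psd_trace_nonneg {n : Type*} [Fintype n] [DecidableEq n]
    {M : Matrix n n ℂ} (hM : M.PosSemidef) : 0 ≤ M.trace := by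
  rw [Matrix.trace]
  apply Finset.sum_nonneg
  intro i _
  have := hM.dotProduct_mulVec_nonneg (Pi.single i 1)
  simpa [dotProduct, Pi.single_apply, Finset.sum_ite_eq] using this

lemma psd_trace_mul_nonneg {n : Type*} [Fintype n] [DecidableEq n]
    {M W : Matrix n n ℂ} (hM : M.PosSemidef) (hW : W.PosSemidef) :
    0 ≤ (M * W).trace := by
  obtain ⟨C, rfl⟩ : ∃ C : Matrix n n ℂ, M = Cᴴ * C := by
    open scoped MatrixOrder in
    obtain ⟨C, rfl⟩ := CStarAlgebra.nonneg_iff_eq_star_mul_self.mp hM.nonneg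
    exact ⟨C, rfl⟩
  rw [Matrix.mul_assoc, Matrix.trace_mul_comm]
  exact psd_trace_nonneg (hW.mul_mul_conjTranspose_same C)

/-- With `d_A = dim H_A`, `d = dim(H_A ⊗ H_B)` and `N̂ = (d_A·id − N)/(d − 1)`:
`N̂` is a valid channel Choi operator (`N̂ ⪰ 0` whenever `N ⪯ d_A·id`, and `Tr_B N̂ = id_A`),
and `P(N) = (d − 1)(2^{S(N̂)} − 1)`, i.e.
`1 − min_W Tr(NW) = (d−1)(max_W Tr(N̂W) − 1)`. -/
theorem stmt8 {A B : Type*} [Fintype A] [Fintype B] [DecidableEq A] [DecidableEq B]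
    [Nonempty A] [Nonempty B]
    (hd : 1 < Fintype.card A * Fintype.card B)
    (N : Matrix (A × B) (A × B) ℂ) (hpsd : N.PosSemidef) (hch : ptraceB N = 1)
    (Nhat : Matrix (A × B) (A × B) ℂ)
    (hNhat : Nhat = (((Fintype.card A * Fintype.card B : ℕ) : ℂ) - 1)⁻¹ •
        ((Fintype.card A : ℂ) • (1 : Matrix (A × B) (A × B) ℂ) - N)) :
    (((Fintype.card A : ℂ) • (1 : Matrix (A × B) (A × B) ℂ) - N).PosSemidef →
      Nhat.PosSemidef) ∧
    ptraceB Nhat = 1 ∧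
    1 - sInf {x : ℝ | ∃ W : Matrix (A × B) (A × B) ℂ,
        W.PosSemidef ∧ ptraceA W = 1 ∧ ((N * W).trace).re = x}
      = ((Fintype.card A * Fintype.card B : ℕ) - 1 : ℝ) *
        (sSup {x : ℝ | ∃ W : Matrix (A × B) (A × B) ℂ,
          W.PosSemidef ∧ ptraceA W = 1 ∧ ((Nhat * W).trace).re = x} - 1) := by
  have hdr : (1 : ℝ) < ((Fintype.card A * Fintype.card B : ℕ) : ℝ) := by exact_mod_cast hd
  set dr : ℝ := ((Fintype.card A * Fintype.card B : ℕ) : ℝ) with hdrdef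
  have hdr1 : (0 : ℝ) < dr - 1 := by linarith
  have hcast : (((Fintype.card A * Fintype.card B : ℕ) : ℂ) - 1)⁻¹
      = ((((dr - 1)⁻¹ : ℝ)) : ℂ) := by
    push_cast [hdrdef]
    norm_num
  have hcne : ((Fintype.card A * Fintype.card B : ℕ) : ℂ) - 1 ≠ 0 := by
    rw [sub_ne_zero]
    exact_mod_cast hd.ne'
  refine ⟨?_, ?_, ?_⟩
  · intro h
    rw [hNhat, hcast]
    exact psd_smul _ (by positivity) h
  · have hNrow : ∀ a a' : A, ∑ b, N (a, b) (a', b) = if a = a' then 1 else 0 := by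
      intro a a'
      have := congrFun (congrFun hch a) a'
      simpa [ptraceB, Matrix.one_apply] using this
    rw [hNhat]
    ext a a'
    by_cases hab : a = a'
    · subst hab
      simp only [ptraceB, Matrix.of_apply, Matrix.smul_apply, Matrix.sub_apply,
        Matrix.one_apply_eq, smul_eq_mul, mul_one]
      rw [← Finset.mul_sum, Finset.sum_sub_distrib, hNrow, if_pos rfl,
        Finset.sum_const, Finset.card_univ, nsmul_eq_mul, inv_mul_eq_one₀ hcne]
      push_cast
      ring
    · simp only [ptraceB, Matrix.of_apply, Matrix.smul_apply, Matrix.sub_apply,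
        Matrix.one_apply, Prod.mk.injEq, hab, false_and, if_false, smul_eq_mul,
        mul_zero, zero_sub, mul_neg, Matrix.one_apply_ne hab]
      rw [Finset.sum_neg_distrib, ← Finset.mul_sum, hNrow, if_neg hab, mul_zero, neg_zero]
  · -- the main analytic part
    set S : Set ℝ := {x : ℝ | ∃ W : Matrix (A × B) (A × B) ℂ,
        W.PosSemidef ∧ ptraceA W = 1 ∧ ((N * W).trace).re = x} with hSdef
    have hcardA : (0 : ℝ) < (Fintype.card A : ℝ) := by
      exact_mod_cast Fintype.card_pos
    -- a concrete W
    have hW0psd : ((((Fintype.card A : ℝ)⁻¹ : ℝ) : ℂ) •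
        (1 : Matrix (A × B) (A × B) ℂ)).PosSemidef :=
      psd_smul _ (by positivity) Matrix.PosSemidef.one
    have hW0pt : ptraceA ((((Fintype.card A : ℝ)⁻¹ : ℝ) : ℂ) •
        (1 : Matrix (A × B) (A × B) ℂ)) = 1 := by
      ext b b'
      simp only [ptraceA, Matrix.of_apply, Matrix.smul_apply, Matrix.one_apply,
        Prod.mk.injEq, smul_eq_mul, mul_ite, mul_one, mul_zero]
      by_cases hb : b = b'
      · subst hb
        simp only [and_true, Matrix.one_apply_eq]
        simp only [if_true, Finset.sum_const, Finset.card_univ, nsmul_eq_mul]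
        push_cast
        rw [mul_inv_cancel₀]
        exact_mod_cast hcardA.ne'
      · simp [hb, Matrix.one_apply_ne hb]
    have hne : S.Nonempty := ⟨_, _, hW0psd, hW0pt, rfl⟩
    have hbdd : BddBelow S := by
      refine ⟨0, ?_⟩
      rintro x ⟨W, hW, hpt, rfl⟩
      exact (Complex.le_def.mp (psd_trace_mul_nonneg hpsd hW)).1
    have htrW : ∀ W : Matrix (A × B) (A × B) ℂ, ptraceA W = 1 →
        W.trace = (Fintype.card B : ℂ) := by
      intro W hpt
      have h1 : W.trace = (ptraceA W).trace := by
        simp only [Matrix.trace, Matrix.diag, ptraceA, Matrix.of_apply,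
          Fintype.sum_prod_type]
        exact Finset.sum_comm
      rw [h1, hpt, Matrix.trace_one]
    have key : ∀ W : Matrix (A × B) (A × B) ℂ, W.PosSemidef → ptraceA W = 1 →
        ((Nhat * W).trace).re = (dr - ((N * W).trace).re) / (dr - 1) := by
      intro W hW hpt
      have h0 := psd_trace_mul_nonneg hpsd hW
      have him : ((N * W).trace).im = 0 := (Complex.le_def.mp h0).2.symm
      have h1 : (N * W).trace = ((((N * W).trace).re : ℝ) : ℂ) := by
        apply Complex.ext <;> simp [him]
      have h2 : (Nhat * W).trace
          = (((dr - ((N * W).trace).re) / (dr - 1) : ℝ) : ℂ) := by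
        rw [hNhat, Matrix.smul_mul, Matrix.trace_smul, Matrix.sub_mul,
          Matrix.smul_mul, Matrix.one_mul, Matrix.trace_sub, Matrix.trace_smul,
          htrW W hpt, hcast]
        conv_lhs => rw [h1]
        rw [smul_eq_mul, smul_eq_mul]
        push_cast [hdrdef]
        rw [div_eq_inv_mul]
      rw [h2, Complex.ofReal_re]
    have hsets : {x : ℝ | ∃ W : Matrix (A × B) (A × B) ℂ,
          W.PosSemidef ∧ ptraceA W = 1 ∧ ((Nhat * W).trace).re = x}
        = (fun y => (dr - y) / (dr - 1)) '' S := by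
      ext x
      constructor
      · rintro ⟨W, hW, hpt, rfl⟩
        exact ⟨((N * W).trace).re, ⟨W, hW, hpt, rfl⟩, (key W hW hpt).symm⟩
      · rintro ⟨y, ⟨W, hW, hpt, rfl⟩, rfl⟩
        exact ⟨W, hW, hpt, key W hW hpt⟩
    have hglb : IsGLB S (sInf S) := isGLB_csInf hne hbdd
    have hlub : IsLUB ((fun y => (dr - y) / (dr - 1)) '' S)
        ((dr - sInf S) / (dr - 1)) := by
      constructor
      · rintro x ⟨y, hy, rfl⟩
        have h := hglb.1 hy
        rw [div_le_div_iff₀ hdr1 hdr1]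
        nlinarith
      · intro b hb
        rw [div_le_iff₀ hdr1]
        have hlow : dr - b * (dr - 1) ≤ sInf S := by
          apply le_csInf hne
          intro y hy
          have := hb ⟨y, hy, rfl⟩
          rw [div_le_iff₀ hdr1] at this
          linarith
        linarith
    have hsSup : sSup ((fun y => (dr - y) / (dr - 1)) '' S)
        = (dr - sInf S) / (dr - 1) := hlub.csSup_eq (hne.image _)
    rw [hsets, hsSup]
    field_simp
    ring
end
end

section
/- Link product positivity: if U ∈ L(H_A ⊗ H_C) and V ∈ L(H_C ⊗ H_B) are positive semidefinite, then their link product U ⋆ V = Tr_C[(U^{T_C} ⊗ id_B)(id_A ⊗ V)] is positive semidefinite on H_A ⊗ H_B. -/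
open Matrix BigOperators ComplexOrder

noncomputable section

private lemma sum4_comm {α β γ δ M : Type*} [Fintype α] [Fintype β] [Fintype γ] [Fintype δ]
    [AddCommMonoid M] (f : α → β → γ → δ → M) :
    ∑ a, ∑ b, ∑ c, ∑ d, f a b c d = ∑ c, ∑ d, ∑ a, ∑ b, f a b c d := by
  have h := Finset.sum_comm (s := (Finset.univ : Finset (α × β)))
    (t := (Finset.univ : Finset (γ × δ))) (f := fun p q => f p.1 p.2 q.1 q.2)
  simpa [Fintype.sum_prod_type] using h

def linkC {A C B : Type*} [Fintype C]
    (U : Matrix (A × C) (A × C) ℂ) (V : Matrix (C × B) (C × B) ℂ) :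
    Matrix (A × B) (A × B) ℂ :=
  Matrix.of fun p q => ∑ c : C, ∑ c' : C, U (p.1, c') (q.1, c) * V (c', p.2) (c, q.2)

/-- Link product positivity: the link product of positive semidefinite operators is
positive semidefinite. -/
theorem stmt9 {A C B : Type*} [Fintype A] [Fintype C] [Fintype B]
    (U : Matrix (A × C) (A × C) ℂ) (V : Matrix (C × B) (C × B) ℂ)
    (hU : U.PosSemidef) (hV : V.PosSemidef) : (linkC U V).PosSemidef := by
  obtain ⟨W, hW⟩ : ∃ W : Matrix (A × C) (A × C) ℂ, U = Wᴴ * W := by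
    classical
    open scoped MatrixOrder Matrix.Norms.L2Operator in
    exact CStarAlgebra.nonneg_iff_eq_star_mul_self.mp hU.nonneg
  obtain ⟨X, hX⟩ : ∃ X : Matrix (C × B) (C × B) ℂ, V = Xᴴ * X := by
    classical
    open scoped MatrixOrder Matrix.Norms.L2Operator in
    exact CStarAlgebra.nonneg_iff_eq_star_mul_self.mp hV.nonneg
  set Z : Matrix ((A × C) × (C × B)) (A × B) ℂ :=
    Matrix.of fun kl p => ∑ c' : C, W kl.1 (p.1, c') * X kl.2 (c', p.2) with hZ
  have key : linkC U V = Zᴴ * Z := by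
    subst hW hX
    ext ⟨a, b⟩ ⟨a', b'⟩
    simp only [linkC, hZ, Matrix.of_apply, Matrix.mul_apply, Matrix.conjTranspose_apply,
      star_sum, star_mul', Finset.sum_mul, Finset.mul_sum]
    rw [sum4_comm (f := fun (c : C) (c' : C) (l : C × B) (k : A × C) =>
      star (W k (a, c')) * W k (a', c) * (star (X l (c', b)) * X l (c, b'))),
      Finset.sum_comm]
    conv_rhs => rw [Fintype.sum_prod_type]
    refine Finset.sum_congr rfl fun k _ => Finset.sum_congr rfl fun l _ =>
      Finset.sum_congr rfl fun c _ => Finset.sum_congr rfl fun c' _ => by ring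
  rw [key]
  exact Matrix.posSemidef_conjTranspose_mul_self _
end
end

section
/- Composition under the Choi isomorphism: for linear maps 𝒩 : L(H_A) → L(H_C) and 𝓜 : L(H_C) → L(H_B), the Choi operator of 𝓜 ∘ 𝒩 equals the link product CJ(𝓜) ⋆ CJ(𝒩) = Tr_C[(CJ(𝓜)^{T_C} ⊗ id_A)(id_B ⊗ CJ(𝒩))] (with appropriate ordering of tensor factors). -/
open Matrix BigOperators ComplexOrder

noncomputable section

/-- Choi operator `N = Σ_{ij} |i⟩⟨j| ⊗ 𝒩(|i⟩⟨j|)` of a linear map `𝒩`. -/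
def choi {A B : Type*} [Fintype A] [DecidableEq A]
    (𝒩 : Matrix A A ℂ →ₗ[ℂ] Matrix B B ℂ) : Matrix (A × B) (A × B) ℂ :=
  Matrix.of fun p q => (𝒩 (Matrix.single p.1 q.1 1)) p.2 q.2

/-- Composition under the Choi isomorphism: `CJ(𝓜 ∘ 𝒩) = CJ(𝒩) ⋆ CJ(𝓜)`,
the link product being taken over the intermediate system `C`. -/
theorem stmt13 {A C B : Type*} [Fintype A] [Fintype C] [Fintype B]
    [DecidableEq A] [DecidableEq C]
    (𝒩 : Matrix A A ℂ →ₗ[ℂ] Matrix C C ℂ) (𝓜 : Matrix C C ℂ →ₗ[ℂ] Matrix B B ℂ) :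
    choi (𝓜.comp 𝒩) = linkC (choi 𝒩) (choi 𝓜) := by
  ext ⟨a, b⟩ ⟨a', b'⟩
  simp only [choi, linkC, LinearMap.comp_apply, Matrix.of_apply]
  conv_lhs =>
    rw [Matrix.matrix_eq_sum_single (𝒩 (Matrix.single a a' 1))]
  rw [map_sum]
  simp only [Finset.sum_apply, Matrix.sum_apply]
  rw [Finset.sum_comm]
  refine Finset.sum_congr rfl fun c _ => ?_
  rw [map_sum, Matrix.sum_apply]
  refine Finset.sum_congr rfl fun c' _ => ?_
  have : Matrix.single c c' (𝒩 (Matrix.single a a' 1) c c')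
      = (𝒩 (Matrix.single a a' 1) c c') • Matrix.single c c' 1 := by
    rw [Matrix.smul_single, smul_eq_mul, mul_one]
  rw [this, _root_.map_smul, Matrix.smul_apply, smul_eq_mul]
end
end

section
/- No-causal-loop bound from marginal channels: let N ∈ L(H_{Ao} ⊗ H_{Bi}) and M ∈ L(H_{Bo} ⊗ H_{Ai}) be Choi operators of channels (N, M ⪰ 0, Tr_{Bi} N = id_{Ao}, Tr_{Ai} M = id_{Bo}). Suppose there exists Υ ⪰ 0 on H_{Ai} ⊗ H_{Ao} ⊗ H_{Bi} ⊗ H_{Bo} whose marginal over (Ai, Bo) is N ⊗ id-compatible and over (Bi, Ao) is M ⊗ id-compatible in the process-matrix sense, i.e., Tr_{Bi Ao} Υ / dim H_{Bo} and Tr_{Ai Bo} Υ / dim H_{Ao} are these two channels and Υ satisfies the bipartite process-matrix linear constraints. Then P(N) + P(M) ≤ 1, where P(X) = 1 − min_{W feasible} Tr(XW). -/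
open Matrix Kronecker BigOperators ComplexOrder

noncomputable section

/- Auxiliary lemmas -/

lemma aux_psd_diag_nonneg {n : Type*} [Fintype n] [DecidableEq n]
    {A : Matrix n n ℂ} (hA : A.PosSemidef) (i : n) : 0 ≤ A i i := by
  exact hA.diag_nonneg

lemma aux_psd_trace_nonneg {n : Type*} [Fintype n] [DecidableEq n]
    {A : Matrix n n ℂ} (hA : A.PosSemidef) : 0 ≤ A.trace :=
  Finset.sum_nonneg fun i _ => aux_psd_diag_nonneg hA i

lemma aux_trace_mul_psd_nonneg {n : Type*} [Fintype n] [DecidableEq n]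
    {A B : Matrix n n ℂ} (hA : A.PosSemidef) (hB : B.PosSemidef) :
    0 ≤ (A * B).trace := by
  open scoped MatrixOrder in
  obtain ⟨C, rfl⟩ := CStarAlgebra.nonneg_iff_eq_star_mul_self.mp hA.nonneg
  rw [Matrix.star_eq_conjTranspose, Matrix.mul_assoc, Matrix.trace_mul_comm]
  exact aux_psd_trace_nonneg (hB.mul_mul_conjTranspose_same C)

lemma aux_psd_comp {n m₁ m₂ : Type*} [Fintype n] [Fintype m₁] [Fintype m₂]
    {W₁ : Matrix m₁ m₁ ℂ} {W₂ : Matrix m₂ m₂ ℂ} (h₁ : W₁.PosSemidef) (h₂ : W₂.PosSemidef)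
    (f : n → m₁) (g : n → m₂) :
    (Matrix.of fun x y => W₁ (f x) (f y) * W₂ (g x) (g y) : Matrix n n ℂ).PosSemidef := by
  classical
  open scoped MatrixOrder in
  obtain ⟨C₁, hC₁⟩ := CStarAlgebra.nonneg_iff_eq_star_mul_self.mp h₁.nonneg
  open scoped MatrixOrder in
  obtain ⟨C₂, hC₂⟩ := CStarAlgebra.nonneg_iff_eq_star_mul_self.mp h₂.nonneg
  rw [Matrix.star_eq_conjTranspose] at hC₁ hC₂
  have : (Matrix.of fun x y => W₁ (f x) (f y) * W₂ (g x) (g y) : Matrix n n ℂ)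
      = (Matrix.of fun (u : m₁ × m₂) x => C₁ u.1 (f x) * C₂ u.2 (g x))ᴴ *
        (Matrix.of fun (u : m₁ × m₂) x => C₁ u.1 (f x) * C₂ u.2 (g x)) := by
    ext x y
    simp only [Matrix.mul_apply, Matrix.conjTranspose_apply, Matrix.of_apply, hC₁, hC₂,
      Fintype.sum_prod_type, star_mul']
    rw [Finset.sum_mul_sum]
    exact Finset.sum_congr rfl fun u _ => Finset.sum_congr rfl fun v _ => by ring
  rw [this]
  exact Matrix.posSemidef_conjTranspose_mul_self _

lemma aux_sum4_pack {α β γ δ : Type*} [Fintype α] [Fintype β] [Fintype γ] [Fintype δ]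
    (f : α → β → γ → δ → ℂ) :
    (∑ a, ∑ b, ∑ c, ∑ d, f a b c d) = ∑ z : α × β × γ × δ, f z.1 z.2.1 z.2.2.1 z.2.2.2 := by
  simp only [Fintype.sum_prod_type]

lemma aux_sum6_pack {α β γ δ ε ζ : Type*} [Fintype α] [Fintype β] [Fintype γ] [Fintype δ]
    [Fintype ε] [Fintype ζ] (f : α → β → γ → δ → ε → ζ → ℂ) :
    (∑ a, ∑ b, ∑ c, ∑ d, ∑ e, ∑ g, f a b c d e g)
      = ∑ z : α × β × γ × δ × ε × ζ, f z.1 z.2.1 z.2.2.1 z.2.2.2.1 z.2.2.2.2.1 z.2.2.2.2.2 := by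
  simp only [Fintype.sum_prod_type]

lemma aux_sum7_pack {α β γ δ ε ζ η : Type*} [Fintype α] [Fintype β] [Fintype γ] [Fintype δ]
    [Fintype ε] [Fintype ζ] [Fintype η] (f : α → β → γ → δ → ε → ζ → η → ℂ) :
    (∑ a, ∑ b, ∑ c, ∑ d, ∑ e, ∑ g, ∑ h, f a b c d e g h)
      = ∑ z : α × β × γ × δ × ε × ζ × η,
          f z.1 z.2.1 z.2.2.1 z.2.2.2.1 z.2.2.2.2.1 z.2.2.2.2.2.1 z.2.2.2.2.2.2 := by
  simp only [Fintype.sum_prod_type]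


section ProcessMatrix

variable {Ai Ao Bi Bo : Type*} [Fintype Ai] [Fintype Ao] [Fintype Bi] [Fintype Bo]
  [DecidableEq Ai] [DecidableEq Ao] [DecidableEq Bi] [DecidableEq Bo]

/-- `_{Ao}Υ = (dim Ao)⁻¹ Tr_{Ao} Υ ⊗ id_{Ao}`. -/
def replAo (Υ : Matrix (Ai × Ao × Bi × Bo) (Ai × Ao × Bi × Bo) ℂ) :
    Matrix (Ai × Ao × Bi × Bo) (Ai × Ao × Bi × Bo) ℂ :=
  Matrix.of fun x y => (if x.2.1 = y.2.1 then ((Fintype.card Ao : ℂ))⁻¹ else 0) *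
    ∑ o : Ao, Υ (x.1, o, x.2.2) (y.1, o, y.2.2)

/-- `_{Bo}Υ`. -/
def replBo (Υ : Matrix (Ai × Ao × Bi × Bo) (Ai × Ao × Bi × Bo) ℂ) :
    Matrix (Ai × Ao × Bi × Bo) (Ai × Ao × Bi × Bo) ℂ :=
  Matrix.of fun x y => (if x.2.2.2 = y.2.2.2 then ((Fintype.card Bo : ℂ))⁻¹ else 0) *
    ∑ p : Bo, Υ (x.1, x.2.1, x.2.2.1, p) (y.1, y.2.1, y.2.2.1, p)

/-- `_{Ao Bo}Υ`. -/
def replAoBo (Υ : Matrix (Ai × Ao × Bi × Bo) (Ai × Ao × Bi × Bo) ℂ) :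
    Matrix (Ai × Ao × Bi × Bo) (Ai × Ao × Bi × Bo) ℂ :=
  Matrix.of fun x y =>
    (if x.2.1 = y.2.1 ∧ x.2.2.2 = y.2.2.2 then ((Fintype.card Ao * Fintype.card Bo : ℂ))⁻¹ else 0) *
    ∑ o : Ao, ∑ p : Bo, Υ (x.1, o, x.2.2.1, p) (y.1, o, y.2.2.1, p)

/-- `_{Ai Ao}Υ`. -/
def replAiAo (Υ : Matrix (Ai × Ao × Bi × Bo) (Ai × Ao × Bi × Bo) ℂ) :
    Matrix (Ai × Ao × Bi × Bo) (Ai × Ao × Bi × Bo) ℂ :=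
  Matrix.of fun x y =>
    (if x.1 = y.1 ∧ x.2.1 = y.2.1 then ((Fintype.card Ai * Fintype.card Ao : ℂ))⁻¹ else 0) *
    ∑ i : Ai, ∑ o : Ao, Υ (i, o, x.2.2) (i, o, y.2.2)

/-- `_{Ai Ao Bo}Υ`. -/
def replAiAoBo (Υ : Matrix (Ai × Ao × Bi × Bo) (Ai × Ao × Bi × Bo) ℂ) :
    Matrix (Ai × Ao × Bi × Bo) (Ai × Ao × Bi × Bo) ℂ :=
  Matrix.of fun x y =>
    (if x.1 = y.1 ∧ x.2.1 = y.2.1 ∧ x.2.2.2 = y.2.2.2 then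
      ((Fintype.card Ai * Fintype.card Ao * Fintype.card Bo : ℂ))⁻¹ else 0) *
    ∑ i : Ai, ∑ o : Ao, ∑ p : Bo, Υ (i, o, x.2.2.1, p) (i, o, y.2.2.1, p)

/-- `_{Bi Bo}Υ`. -/
def replBiBo (Υ : Matrix (Ai × Ao × Bi × Bo) (Ai × Ao × Bi × Bo) ℂ) :
    Matrix (Ai × Ao × Bi × Bo) (Ai × Ao × Bi × Bo) ℂ :=
  Matrix.of fun x y =>
    (if x.2.2 = y.2.2 then ((Fintype.card Bi * Fintype.card Bo : ℂ))⁻¹ else 0) *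
    ∑ b : Bi, ∑ p : Bo, Υ (x.1, x.2.1, b, p) (y.1, y.2.1, b, p)

/-- `_{Bi Bo Ao}Υ`. -/
def replBiBoAo (Υ : Matrix (Ai × Ao × Bi × Bo) (Ai × Ao × Bi × Bo) ℂ) :
    Matrix (Ai × Ao × Bi × Bo) (Ai × Ao × Bi × Bo) ℂ :=
  Matrix.of fun x y =>
    (if x.2.1 = y.2.1 ∧ x.2.2 = y.2.2 then
      ((Fintype.card Ao * Fintype.card Bi * Fintype.card Bo : ℂ))⁻¹ else 0) *
    ∑ o : Ao, ∑ b : Bi, ∑ p : Bo, Υ (x.1, o, b, p) (y.1, o, b, p)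

/- ### Auxiliary trace computations -/

lemma aux_traceNW (Υ : Matrix (Ai × Ao × Bi × Bo) (Ai × Ao × Bi × Bo) ℂ)
    (N : Matrix (Ao × Bi) (Ao × Bi) ℂ) (W₁ : Matrix (Ao × Bi) (Ao × Bi) ℂ)
    (hmargN : N = Matrix.of fun x y => ((Fintype.card Ao : ℂ))⁻¹ *
      ∑ i : Ai, ∑ p : Bo, Υ (i, x.1, x.2, p) (i, y.1, y.2, p)) :
    (N * W₁).trace = ((Fintype.card Ao : ℂ))⁻¹ *
      ∑ z : Ai × Ao × Bi × Bo × Ao × Bi,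
        Υ (z.1, z.2.1, z.2.2.1, z.2.2.2.1) (z.1, z.2.2.2.2.1, z.2.2.2.2.2, z.2.2.2.1)
          * W₁ (z.2.2.2.2.1, z.2.2.2.2.2) (z.2.1, z.2.2.1) := by
  rw [hmargN]
  conv_lhs => simp only [Matrix.trace, Matrix.diag, Matrix.mul_apply, Matrix.of_apply,
    Fintype.sum_prod_type, Finset.mul_sum, Finset.sum_mul]
  rw [aux_sum6_pack, Finset.mul_sum]
  exact Fintype.sum_equiv
    ⟨fun z => (z.2.2.2.2.1, z.1, z.2.1, z.2.2.2.2.2, z.2.2.1, z.2.2.2.1),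
     fun z => (z.2.1, z.2.2.1, z.2.2.2.2.1, z.2.2.2.2.2, z.1, z.2.2.2.1),
     fun _ => rfl, fun _ => rfl⟩ _ _ (fun z => by simp only [Equiv.coe_fn_mk]; ring)

lemma aux_traceMW (Υ : Matrix (Ai × Ao × Bi × Bo) (Ai × Ao × Bi × Bo) ℂ)
    (M : Matrix (Bo × Ai) (Bo × Ai) ℂ) (W₂ : Matrix (Bo × Ai) (Bo × Ai) ℂ)
    (hmargM : M = Matrix.of fun x y => ((Fintype.card Bo : ℂ))⁻¹ *
      ∑ o : Ao, ∑ b : Bi, Υ (x.2, o, b, x.1) (y.2, o, b, y.1)) :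
    (M * W₂).trace = ((Fintype.card Bo : ℂ))⁻¹ *
      ∑ z : Ai × Ao × Bi × Bo × Ai × Bo,
        Υ (z.1, z.2.1, z.2.2.1, z.2.2.2.1) (z.2.2.2.2.1, z.2.1, z.2.2.1, z.2.2.2.2.2)
          * W₂ (z.2.2.2.2.2, z.2.2.2.2.1) (z.2.2.2.1, z.1) := by
  rw [hmargM]
  conv_lhs => simp only [Matrix.trace, Matrix.diag, Matrix.mul_apply, Matrix.of_apply,
    Fintype.sum_prod_type, Finset.mul_sum, Finset.sum_mul]
  rw [aux_sum6_pack, Finset.mul_sum]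
  exact Fintype.sum_equiv
    ⟨fun z => (z.2.1, z.2.2.2.2.1, z.2.2.2.2.2, z.1, z.2.2.2.1, z.2.2.1),
     fun w => (w.2.2.2.1, w.1, w.2.2.2.2.2, w.2.2.2.2.1, w.2.1, w.2.2.1),
     fun _ => rfl, fun _ => rfl⟩ _ _ (fun z => by simp only [Equiv.coe_fn_mk]; ring)

lemma aux_traceA (Υ : Matrix (Ai × Ao × Bi × Bo) (Ai × Ao × Bi × Bo) ℂ)
    (W₁ : Matrix (Ao × Bi) (Ao × Bi) ℂ) (W₂ : Matrix (Bo × Ai) (Bo × Ai) ℂ)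
    (hW₁' : ∀ b b', ∑ a : Ao, W₁ (a, b) (a, b') = if b = b' then (1:ℂ) else 0) :
    ((replAo Υ) * (Matrix.of fun (x y : Ai × Ao × Bi × Bo) => W₁ (x.2.1, x.2.2.1) (y.2.1, y.2.2.1)
        * W₂ (x.2.2.2, x.1) (y.2.2.2, y.1))).trace
      = ((Fintype.card Ao : ℂ))⁻¹ * ∑ z : Ai × Ao × Bi × Bo × Ai × Bo,
          Υ (z.1, z.2.1, z.2.2.1, z.2.2.2.1) (z.2.2.2.2.1, z.2.1, z.2.2.1, z.2.2.2.2.2)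
            * W₂ (z.2.2.2.2.2, z.2.2.2.2.1) (z.2.2.2.1, z.1) := by
  have hcol : ∀ (A B : ℂ) (b b' : Bi), (∑ o : Ao, A * (W₁ (o, b') (o, b) * B))
      = A * ((if b' = b then (1:ℂ) else 0) * B) := by
    intro A B b b'
    rw [← Finset.mul_sum, ← Finset.sum_mul, hW₁' b' b]
  simp only [Matrix.trace, Matrix.diag, Matrix.mul_apply, Matrix.of_apply, replAo,
    Fintype.sum_prod_type, ite_mul, zero_mul, mul_ite, mul_zero,
    Finset.sum_ite_irrel, Finset.sum_ite_eq, Finset.sum_ite_eq',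
    Finset.sum_const_zero, Finset.mem_univ, if_true]
  conv_lhs =>
    rw [aux_sum7_pack, ← Equiv.sum_comp
      (⟨fun w => (w.1, w.2.2.2.2.2.2, w.2.1, w.2.2.1, w.2.2.2.1, w.2.2.2.2.1, w.2.2.2.2.2.1),
        fun z => (z.1, z.2.2.1, z.2.2.2.1, z.2.2.2.2.1, z.2.2.2.2.2.1, z.2.2.2.2.2.2, z.2.1),
        fun _ => rfl, fun _ => rfl⟩ :
        (Ai × Bi × Bo × Ai × Bi × Bo × Ao) ≃ (Ai × Ao × Bi × Bo × Ai × Bi × Bo))]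
    simp only [Equiv.coe_fn_mk]
    simp only [Fintype.sum_prod_type]
  simp only [hcol]
  simp only [mul_ite, mul_zero, mul_one, ite_mul, zero_mul, one_mul,
    Finset.sum_ite_irrel, Finset.sum_ite_eq, Finset.sum_ite_eq', Finset.mem_univ, if_true,
    Finset.sum_const_zero]
  simp only [Finset.sum_mul, Finset.mul_sum]
  rw [aux_sum6_pack, aux_sum6_pack]
  exact Fintype.sum_equiv
    ⟨fun z => (z.1, z.2.2.2.2.2, z.2.1, z.2.2.1, z.2.2.2.1, z.2.2.2.2.1),
     fun w => (w.1, w.2.2.1, w.2.2.2.1, w.2.2.2.2.1, w.2.2.2.2.2, w.2.1),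
     fun _ => rfl, fun _ => rfl⟩ _ _ (fun z => by simp only [Equiv.coe_fn_mk]; ring)

lemma aux_traceB (Υ : Matrix (Ai × Ao × Bi × Bo) (Ai × Ao × Bi × Bo) ℂ)
    (W₁ : Matrix (Ao × Bi) (Ao × Bi) ℂ) (W₂ : Matrix (Bo × Ai) (Bo × Ai) ℂ)
    (hW₂' : ∀ i i', ∑ a : Bo, W₂ (a, i) (a, i') = if i = i' then (1:ℂ) else 0) :
    ((replBo Υ) * (Matrix.of fun (x y : Ai × Ao × Bi × Bo) => W₁ (x.2.1, x.2.2.1) (y.2.1, y.2.2.1)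
        * W₂ (x.2.2.2, x.1) (y.2.2.2, y.1))).trace
      = ((Fintype.card Bo : ℂ))⁻¹ * ∑ z : Ai × Ao × Bi × Bo × Ao × Bi,
          Υ (z.1, z.2.1, z.2.2.1, z.2.2.2.1) (z.1, z.2.2.2.2.1, z.2.2.2.2.2, z.2.2.2.1)
            * W₁ (z.2.2.2.2.1, z.2.2.2.2.2) (z.2.1, z.2.2.1) := by
  have hcol : ∀ (A B : ℂ) (i i' : Ai), (∑ p : Bo, A * (B * W₂ (p, i') (p, i)))
      = A * (B * (if i' = i then (1:ℂ) else 0)) := by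
    intro A B i i'
    rw [← Finset.mul_sum, ← Finset.mul_sum, hW₂' i' i]
  simp only [Matrix.trace, Matrix.diag, Matrix.mul_apply, Matrix.of_apply, replBo,
    Fintype.sum_prod_type, ite_mul, zero_mul, mul_ite, mul_zero,
    Finset.sum_ite_irrel, Finset.sum_ite_eq, Finset.sum_ite_eq',
    Finset.sum_const_zero, Finset.mem_univ, if_true]
  conv_lhs =>
    rw [aux_sum7_pack, ← Equiv.sum_comp
      (⟨fun w => (w.1, w.2.1, w.2.2.1, w.2.2.2.2.2.2, w.2.2.2.1, w.2.2.2.2.1, w.2.2.2.2.2.1),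
        fun z => (z.1, z.2.1, z.2.2.1, z.2.2.2.2.1, z.2.2.2.2.2.1, z.2.2.2.2.2.2, z.2.2.2.1),
        fun _ => rfl, fun _ => rfl⟩ :
        (Ai × Ao × Bi × Ai × Ao × Bi × Bo) ≃ (Ai × Ao × Bi × Bo × Ai × Ao × Bi))]
    simp only [Equiv.coe_fn_mk]
    simp only [Fintype.sum_prod_type]
  simp only [hcol]
  simp only [mul_ite, mul_zero, mul_one, ite_mul, zero_mul, one_mul,
    Finset.sum_ite_irrel, Finset.sum_ite_eq, Finset.sum_ite_eq', Finset.mem_univ, if_true,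
    Finset.sum_const_zero]
  simp only [Finset.sum_mul, Finset.mul_sum]
  rw [aux_sum6_pack, aux_sum6_pack]
  exact Fintype.sum_equiv
    ⟨fun z => (z.1, z.2.1, z.2.2.1, z.2.2.2.2.2, z.2.2.2.1, z.2.2.2.2.1),
     fun w => (w.1, w.2.1, w.2.2.1, w.2.2.2.2.1, w.2.2.2.2.2, w.2.2.2.1),
     fun _ => rfl, fun _ => rfl⟩ _ _ (fun z => by simp only [Equiv.coe_fn_mk]; ring)

lemma aux_traceC (Υ : Matrix (Ai × Ao × Bi × Bo) (Ai × Ao × Bi × Bo) ℂ)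
    (W₁ : Matrix (Ao × Bi) (Ao × Bi) ℂ) (W₂ : Matrix (Bo × Ai) (Bo × Ai) ℂ)
    (hW₁' : ∀ b b', ∑ a : Ao, W₁ (a, b) (a, b') = if b = b' then (1:ℂ) else 0)
    (hW₂' : ∀ i i', ∑ a : Bo, W₂ (a, i) (a, i') = if i = i' then (1:ℂ) else 0) :
    ((replAoBo Υ) * (Matrix.of fun (x y : Ai × Ao × Bi × Bo) =>
        W₁ (x.2.1, x.2.2.1) (y.2.1, y.2.2.1) * W₂ (x.2.2.2, x.1) (y.2.2.2, y.1))).trace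
      = ((Fintype.card Ao * Fintype.card Bo : ℂ))⁻¹ * ∑ z : Ai × Ao × Bi × Bo, Υ z z := by
  have hcol2 : ∀ (A B : ℂ) (i i' : Ai), (∑ p : Bo, A * (B * W₂ (p, i') (p, i)))
      = A * (B * (if i' = i then (1:ℂ) else 0)) := by
    intro A B i i'
    rw [← Finset.mul_sum, ← Finset.mul_sum, hW₂' i' i]
  have hcol1 : ∀ (A B : ℂ) (b b' : Bi), (∑ o : Ao, A * (W₁ (o, b') (o, b) * B))
      = A * ((if b' = b then (1:ℂ) else 0) * B) := by
    intro A B b b'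
    rw [← Finset.mul_sum, ← Finset.sum_mul, hW₁' b' b]
  simp only [Matrix.trace, Matrix.diag, Matrix.mul_apply, Matrix.of_apply, replAoBo, ite_and,
    Fintype.sum_prod_type, ite_mul, zero_mul, mul_ite, mul_zero,
    Finset.sum_ite_irrel, Finset.sum_ite_eq, Finset.sum_ite_eq',
    Finset.sum_const_zero, Finset.mem_univ, if_true]
  conv_lhs =>
    rw [aux_sum6_pack, ← Equiv.sum_comp
      (⟨fun w => (w.1, w.2.2.2.2.1, w.2.1, w.2.2.2.2.2, w.2.2.1, w.2.2.2.1),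
        fun z => (z.1, z.2.2.1, z.2.2.2.2.1, z.2.2.2.2.2, z.2.1, z.2.2.2.1),
        fun _ => rfl, fun _ => rfl⟩ :
        (Ai × Bi × Ai × Bi × Ao × Bo) ≃ (Ai × Ao × Bi × Bo × Ai × Bi))]
    simp only [Equiv.coe_fn_mk]
    simp only [Fintype.sum_prod_type]
  simp only [hcol2]
  simp only [hcol1]
  simp only [mul_ite, mul_zero, mul_one, ite_mul, zero_mul, one_mul,
    Finset.sum_ite_irrel, Finset.sum_ite_eq, Finset.sum_ite_eq', Finset.mem_univ, if_true,
    Finset.sum_const_zero]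
  simp only [Finset.sum_mul, Finset.mul_sum]
  rw [aux_sum4_pack, aux_sum4_pack]
  exact Fintype.sum_equiv
    ⟨fun z => (z.1, z.2.2.1, z.2.1, z.2.2.2),
     fun w => (w.1, w.2.2.1, w.2.1, w.2.2.2),
     fun _ => rfl, fun _ => rfl⟩ _ _ (fun z => by simp only [Equiv.coe_fn_mk]; try ring)

lemma aux_traceN_marg (Υ : Matrix (Ai × Ao × Bi × Bo) (Ai × Ao × Bi × Bo) ℂ)
    (N : Matrix (Ao × Bi) (Ao × Bi) ℂ)
    (hmargN : N = Matrix.of fun x y => ((Fintype.card Ao : ℂ))⁻¹ *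
      ∑ i : Ai, ∑ p : Bo, Υ (i, x.1, x.2, p) (i, y.1, y.2, p)) :
    N.trace = ((Fintype.card Ao : ℂ))⁻¹ * ∑ z : Ai × Ao × Bi × Bo, Υ z z := by
  rw [hmargN]
  conv_lhs => simp only [Matrix.trace, Matrix.diag, Matrix.of_apply,
    Fintype.sum_prod_type, Finset.mul_sum]
  rw [aux_sum4_pack, Finset.mul_sum]
  exact Fintype.sum_equiv
    ⟨fun z => (z.2.2.1, z.1, z.2.1, z.2.2.2),
     fun w => (w.2.1, w.2.2.1, w.1, w.2.2.2),
     fun _ => rfl, fun _ => rfl⟩ _ _ (fun z => by simp only [Equiv.coe_fn_mk]; try ring)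

end ProcessMatrix

section ProcessMatrix

variable {Ai Ao Bi Bo : Type*} [Fintype Ai] [Fintype Ao] [Fintype Bi] [Fintype Bo]
  [DecidableEq Ai] [DecidableEq Ao] [DecidableEq Bi] [DecidableEq Bo]

/-- No-causal-loop bound: if `N` (a channel `Ao → Bi`) and `M` (a channel `Bo → Ai`) are the
marginal channels of a valid bipartite process matrix `Υ`, then `P(N) + P(M) ≤ 1`,
where `P(X) = 1 − min_W Tr(XW)` over opposite-direction channel Choi operators `W`. -/
theorem stmt17 [Nonempty Ai] [Nonempty Ao] [Nonempty Bi] [Nonempty Bo]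
    (N : Matrix (Ao × Bi) (Ao × Bi) ℂ) (hNpsd : N.PosSemidef) (hNch : ptraceB N = 1)
    (M : Matrix (Bo × Ai) (Bo × Ai) ℂ) (hMpsd : M.PosSemidef) (hMch : ptraceB M = 1)
    (Υ : Matrix (Ai × Ao × Bi × Bo) (Ai × Ao × Bi × Bo) ℂ)
    (hpsd : Υ.PosSemidef)
    (htr : Υ.trace = ((Fintype.card Ao * Fintype.card Bo : ℕ) : ℂ))
    (hc1 : Υ = replAo Υ + replBo Υ - replAoBo Υ)
    (hc2 : replAiAo Υ = replAiAoBo Υ)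
    (hc3 : replBiBo Υ = replBiBoAo Υ)
    (hmargN : N = Matrix.of fun x y => ((Fintype.card Ao : ℂ))⁻¹ *
      ∑ i : Ai, ∑ p : Bo, Υ (i, x.1, x.2, p) (i, y.1, y.2, p))
    (hmargM : M = Matrix.of fun x y => ((Fintype.card Bo : ℂ))⁻¹ *
      ∑ o : Ao, ∑ b : Bi, Υ (x.2, o, b, x.1) (y.2, o, b, y.1)) :
    (1 - sInf {x : ℝ | ∃ W : Matrix (Ao × Bi) (Ao × Bi) ℂ,
        W.PosSemidef ∧ ptraceA W = 1 ∧ ((N * W).trace).re = x})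
      + (1 - sInf {x : ℝ | ∃ W : Matrix (Bo × Ai) (Bo × Ai) ℂ,
          W.PosSemidef ∧ ptraceA W = 1 ∧ ((M * W).trace).re = x}) ≤ 1 := by
  classical
  have ho : (Fintype.card Ao : ℂ) ≠ 0 := Nat.cast_ne_zero.mpr Fintype.card_ne_zero
  have hp : (Fintype.card Bo : ℂ) ≠ 0 := Nat.cast_ne_zero.mpr Fintype.card_ne_zero
  have hΥtr : (∑ z : Ai × Ao × Bi × Bo, Υ z z)
      = (Fintype.card Ao : ℂ) * (Fintype.card Bo : ℂ) := by
    have h := htr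
    simp only [Matrix.trace, Matrix.diag] at h
    rw [h]; push_cast; ring
  -- card Ao = card Bo (as complex numbers)
  have hNch' : ∀ o o', ∑ b : Bi, N (o, b) (o', b) = if o = o' then (1:ℂ) else 0 := by
    intro o o'
    have := (Matrix.ext_iff.mpr hNch) o o'
    simpa [ptraceB, Matrix.one_apply] using this
  have htrN1 : N.trace = (Fintype.card Ao : ℂ) := by
    simp [Matrix.trace, Matrix.diag, Fintype.sum_prod_type, hNch']
  have hop : (Fintype.card Ao : ℂ) = (Fintype.card Bo : ℂ) := by
    have h2 := aux_traceN_marg Υ N hmargN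
    rw [hΥtr, htrN1, inv_mul_cancel_left₀ ho] at h2
    exact h2
  -- the key pointwise bound
  have key : ∀ (W₁ : Matrix (Ao × Bi) (Ao × Bi) ℂ), W₁.PosSemidef → ptraceA W₁ = 1 →
      ∀ (W₂ : Matrix (Bo × Ai) (Bo × Ai) ℂ), W₂.PosSemidef → ptraceA W₂ = 1 →
      1 ≤ ((N * W₁).trace).re + ((M * W₂).trace).re := by
    intro W₁ hps1 hpt1 W₂ hps2 hpt2
    have hW₁' : ∀ b b', ∑ a : Ao, W₁ (a, b) (a, b') = if b = b' then (1:ℂ) else 0 := by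
      intro b b'
      have := (Matrix.ext_iff.mpr hpt1) b b'
      simpa [ptraceA, Matrix.one_apply] using this
    have hW₂' : ∀ i i', ∑ a : Bo, W₂ (a, i) (a, i') = if i = i' then (1:ℂ) else 0 := by
      intro i i'
      have := (Matrix.ext_iff.mpr hpt2) i i'
      simpa [ptraceA, Matrix.one_apply] using this
    set K : Matrix (Ai × Ao × Bi × Bo) (Ai × Ao × Bi × Bo) ℂ :=
      Matrix.of fun (x y : Ai × Ao × Bi × Bo) =>
        W₁ (x.2.1, x.2.2.1) (y.2.1, y.2.2.1) * W₂ (x.2.2.2, x.1) (y.2.2.2, y.1) with hKdef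
    have hK : K.PosSemidef :=
      aux_psd_comp hps1 hps2 (fun x : Ai × Ao × Bi × Bo => (x.2.1, x.2.2.1))
        (fun x : Ai × Ao × Bi × Bo => (x.2.2.2, x.1))
    have h0 : 0 ≤ (Υ * K).trace := aux_trace_mul_psd_nonneg hpsd hK
    have hsplit : (Υ * K).trace = ((replAo Υ) * K).trace + ((replBo Υ) * K).trace
        - ((replAoBo Υ) * K).trace := by
      conv_lhs => rw [hc1]
      rw [Matrix.sub_mul, Matrix.add_mul, Matrix.trace_sub, Matrix.trace_add]
    have hTC1 : ((replAoBo Υ) * K).trace = 1 := by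
      rw [hKdef, aux_traceC Υ W₁ W₂ hW₁' hW₂', hΥtr, inv_mul_cancel₀ (mul_ne_zero ho hp)]
    have main : (N * W₁).trace + (M * W₂).trace = 1 + (Υ * K).trace := by
      rw [hsplit, hTC1, hKdef, aux_traceA Υ W₁ W₂ hW₁', aux_traceB Υ W₁ W₂ hW₂',
        aux_traceNW Υ N W₁ hmargN, aux_traceMW Υ M W₂ hmargM, hop]
      ring
    have hre := congrArg Complex.re main
    simp only [Complex.add_re, Complex.one_re] at hre
    have h0re : 0 ≤ ((Υ * K).trace).re := by
      rw [Complex.le_def] at h0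
      simpa using h0.1
    linarith
  -- nonemptiness witnesses
  have hW0A : ∃ x : ℝ, ∃ W : Matrix (Ao × Bi) (Ao × Bi) ℂ,
      W.PosSemidef ∧ ptraceA W = 1 ∧ ((N * W).trace).re = x := by
    refine ⟨_, Matrix.diagonal (fun _ => ((Fintype.card Ao : ℂ))⁻¹), ?_, ?_, rfl⟩
    · refine Matrix.posSemidef_diagonal_iff.mpr fun i => ?_
      have : ((Fintype.card Ao : ℂ))⁻¹ = (((Fintype.card Ao : ℝ))⁻¹ : ℂ) := by push_cast; ring
      rw [this]
      exact_mod_cast Complex.zero_le_real.mpr (by positivity)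
    · ext b b'
      by_cases h : b = b' <;>
        simp [ptraceA, Matrix.diagonal_apply, Matrix.one_apply, h, Prod.ext_iff,
          Finset.sum_const, nsmul_eq_mul, mul_inv_cancel₀ ho]
  have hW0B : ∃ x : ℝ, ∃ W : Matrix (Bo × Ai) (Bo × Ai) ℂ,
      W.PosSemidef ∧ ptraceA W = 1 ∧ ((M * W).trace).re = x := by
    refine ⟨_, Matrix.diagonal (fun _ => ((Fintype.card Bo : ℂ))⁻¹), ?_, ?_, rfl⟩
    · refine Matrix.posSemidef_diagonal_iff.mpr fun i => ?_
      have : ((Fintype.card Bo : ℂ))⁻¹ = (((Fintype.card Bo : ℝ))⁻¹ : ℂ) := by push_cast; ring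
      rw [this]
      exact_mod_cast Complex.zero_le_real.mpr (by positivity)
    · ext b b'
      by_cases h : b = b' <;>
        simp [ptraceA, Matrix.diagonal_apply, Matrix.one_apply, h, Prod.ext_iff,
          Finset.sum_const, nsmul_eq_mul, mul_inv_cancel₀ hp]
  have h1 : 1 - sInf {x : ℝ | ∃ W : Matrix (Bo × Ai) (Bo × Ai) ℂ,
      W.PosSemidef ∧ ptraceA W = 1 ∧ ((M * W).trace).re = x}
      ≤ sInf {x : ℝ | ∃ W : Matrix (Ao × Bi) (Ao × Bi) ℂ,
        W.PosSemidef ∧ ptraceA W = 1 ∧ ((N * W).trace).re = x} := by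
    refine le_csInf hW0A ?_
    rintro x ⟨W₁, hps1, hpt1, rfl⟩
    rw [sub_le_iff_le_add, ← sub_le_iff_le_add']
    refine le_csInf hW0B ?_
    rintro y ⟨W₂, hps2, hpt2, rfl⟩
    have := key W₁ hps1 hpt1 W₂ hps2 hpt2
    linarith
  linarith
end ProcessMatrix
end
end

section
/- For the qubit phase-covariant dynamics with Choi operator N_t = [[1−H, 0, 0, GΓ],[0, H, 0, 0],[0, 0, 1−G²−H, 0],[GΓ, 0, 0, G²+H]] (in the ordered basis |00⟩,|01⟩,|10⟩,|11⟩), where G, Γ ∈ (0,1], H ∈ [0, 1−G²], and Γ/G > 0, the maximum of Tr(N_t W) over W ⪰ 0 with Tr_A W = id_B equals 1 + G² + 2GΓ. -/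
open Matrix Kronecker BigOperators ComplexOrder

noncomputable section

/-- Embedding of `Fin 2 × Fin 2` into `Fin 4` following the ordered basis
`|00⟩, |01⟩, |10⟩, |11⟩`. -/
def idx : Fin 2 × Fin 2 → Fin 4 :=
  fun p => ⟨2 * p.1.1 + p.2.1, by have := p.1.isLt; have := p.2.isLt; omega⟩

/-- The optimal feasible operator: `|φ⟩⟨φ|` with `φ = |00⟩ + |11⟩`. -/
def Wopt : Matrix (Fin 2 × Fin 2) (Fin 2 × Fin 2) ℂ :=
  (Matrix.of fun (_ : Fin 1) (q : Fin 2 × Fin 2) => if q.1 = q.2 then (1:ℂ) else 0)ᴴ *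
  (Matrix.of fun (_ : Fin 1) (q : Fin 2 × Fin 2) => if q.1 = q.2 then (1:ℂ) else 0)

lemma traceNW (G Γ H : ℝ) (W : Matrix (Fin 2 × Fin 2) (Fin 2 × Fin 2) ℂ) :
    ((((!![((1 - H : ℝ) : ℂ), 0, 0, ((G * Γ : ℝ) : ℂ);
            0, ((H : ℝ) : ℂ), 0, 0;
            0, 0, ((1 - G ^ 2 - H : ℝ) : ℂ), 0;
            ((G * Γ : ℝ) : ℂ), 0, 0, ((G ^ 2 + H : ℝ) : ℂ)]).submatrix idx idx) * W).trace).re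
      = (1-H) * (W (0,0) (0,0)).re + H * (W (0,1) (0,1)).re
        + (1-G^2-H) * (W (1,0) (1,0)).re + (G^2+H) * (W (1,1) (1,1)).re
        + G*Γ * (W (1,1) (0,0)).re + G*Γ * (W (0,0) (1,1)).re := by
  rw [Matrix.trace]
  simp only [Matrix.diag, Matrix.mul_apply, Fintype.sum_prod_type, Fin.sum_univ_two,
    Matrix.submatrix_apply, idx]
  norm_num [← Complex.ofReal_pow]
  ring

lemma diag_facts (W : Matrix (Fin 2 × Fin 2) (Fin 2 × Fin 2) ℂ) (hW : W.PosSemidef)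
    (p : Fin 2 × Fin 2) : 0 ≤ (W p p).re := by
  have := hW.dotProduct_mulVec_nonneg (Pi.single p 1)
  rw [Complex.le_def] at this
  have h2 : 0 ≤ (W p p).re ∧ 0 = (W p p).im := by
    simpa [dotProduct, Matrix.mulVec, Pi.single_apply] using this
  exact h2.1

lemma offdiag_fact (W : Matrix (Fin 2 × Fin 2) (Fin 2 × Fin 2) ℂ) (hW : W.PosSemidef) :
    2 * (W (0,0) (1,1)).re ≤ (W (0,0) (0,0)).re + (W (1,1) (1,1)).re := by
  have h := hW.dotProduct_mulVec_nonneg (fun p => if p = (0,0) then 1 else if p = (1,1) then -1 else 0)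
  rw [Complex.le_def] at h
  have hh : (W (1,1) (0,0)).re = (W (0,0) (1,1)).re := by
    rw [← hW.1.apply (0,0) (1,1)]; simp
  simp only [dotProduct, Matrix.mulVec, Fintype.sum_prod_type, Fin.sum_univ_two] at h
  norm_num at h
  simp only [Prod.mk_zero_zero, Prod.mk_one_one] at h hh ⊢
  linarith [h.1, hh]

lemma herm_re (W : Matrix (Fin 2 × Fin 2) (Fin 2 × Fin 2) ℂ) (hW : W.PosSemidef) :
    (W (1,1) (0,0)).re = (W (0,0) (1,1)).re := by
  rw [← hW.1.apply (0,0) (1,1)]; simp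

/-- For the qubit phase-covariant dynamics with Choi operator `N_t`, the maximum of
`Tr(N_t W)` over feasible `W` equals `1 + G² + 2GΓ`. -/
theorem stmt18 (G Γ H : ℝ) (hG0 : 0 < G) (hG1 : G ≤ 1) (hΓ0 : 0 < Γ) (hΓ1 : Γ ≤ 1)
    (hH0 : 0 ≤ H) (hH1 : H ≤ 1 - G ^ 2)
    (N : Matrix (Fin 2 × Fin 2) (Fin 2 × Fin 2) ℂ)
    (hN : N = (!![((1 - H : ℝ) : ℂ), 0, 0, ((G * Γ : ℝ) : ℂ);
                  0, ((H : ℝ) : ℂ), 0, 0;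
                  0, 0, ((1 - G ^ 2 - H : ℝ) : ℂ), 0;
                  ((G * Γ : ℝ) : ℂ), 0, 0, ((G ^ 2 + H : ℝ) : ℂ)]).submatrix idx idx) :
    IsGreatest {x : ℝ | ∃ W : Matrix (Fin 2 × Fin 2) (Fin 2 × Fin 2) ℂ,
      W.PosSemidef ∧ ptraceA W = 1 ∧ ((N * W).trace).re = x}
      (1 + G ^ 2 + 2 * G * Γ) := by
  subst hN
  constructor
  · refine ⟨Wopt, posSemidef_conjTranspose_mul_self _, ?_, ?_⟩
    · ext b b'
      fin_cases b <;> fin_cases b' <;>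
        simp [ptraceA, Wopt, Matrix.mul_apply, Matrix.conjTranspose_apply, Fin.sum_univ_two,
          Matrix.one_apply]
    · rw [traceNW]
      have hw : ∀ p q : Fin 2 × Fin 2,
          Wopt p q = if p.1 = p.2 ∧ q.1 = q.2 then 1 else 0 := by
        intro p q
        simp only [Wopt, Matrix.mul_apply, Matrix.conjTranspose_apply, Matrix.of_apply,
          Fin.sum_univ_one]
        split_ifs <;> simp_all
      simp only [hw]
      norm_num
      ring
  · rintro x ⟨W, hW, hA, rfl⟩
    rw [traceNW]
    have h00 : (W (0,0) (0,0)).re + (W (1,0) (1,0)).re = 1 := by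
      have := congrFun (congrFun hA 0) 0
      simp only [ptraceA, Matrix.of_apply, Fin.sum_univ_two, Matrix.one_apply_eq] at this
      have := congrArg Complex.re this
      simpa using this
    have h11 : (W (0,1) (0,1)).re + (W (1,1) (1,1)).re = 1 := by
      have := congrFun (congrFun hA 1) 1
      simp only [ptraceA, Matrix.of_apply, Fin.sum_univ_two, Matrix.one_apply_eq] at this
      have := congrArg Complex.re this
      simpa using this
    have d1 := diag_facts W hW (0,0)
    have d2 := diag_facts W hW (0,1)
    have d3 := diag_facts W hW (1,0)
    have d4 := diag_facts W hW (1,1)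
    have hod := offdiag_fact W hW
    have hh := herm_re W hW
    set a := (W (0,0) (0,0)).re
    set b := (W (0,1) (0,1)).re
    set c := (W (1,0) (1,0)).re
    set d := (W (1,1) (1,1)).re
    set r := (W (0,0) (1,1)).re
    rw [hh]
    have hGΓ : 0 ≤ G * Γ := by positivity
    have k1 : G^2 * (a + d - 2) ≤ 0 := by nlinarith [sq_nonneg G]
    have k2 : G*Γ * (2*r - (a+d)) ≤ 0 := mul_nonpos_of_nonneg_of_nonpos hGΓ (by linarith)
    have k3 : G*Γ * ((a+d) - 2) ≤ 0 := mul_nonpos_of_nonneg_of_nonpos hGΓ (by linarith)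
    nlinarith [k1, k2, k3]
end
end

section
/- The differential equation 16 γ̇_z + γ² − 16 γ_z² = 0 with initial condition γ_z(0) = 0 and constant γ > 0 has the unique solution γ_z(t) = −(γ/4) tanh(γt/4); moreover this solution satisfies the integral relation γ + 4γ_z(t) − γ·exp(−(1/4)∫₀ᵗ [γ − 4γ_z(s)] ds) = 0 for all t ≥ 0. -/
open MeasureTheory intervalIntegral

lemma tanh_hasDerivAt (x : ℝ) :
    HasDerivAt Real.tanh (1 - Real.tanh x ^ 2) x := by
  have h := (Real.hasDerivAt_sinh x).div (Real.hasDerivAt_cosh x) (Real.cosh_pos x).ne'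
  have hfun : (Real.sinh / Real.cosh) = Real.tanh := by
    funext y; rw [Pi.div_apply, Real.tanh_eq_sinh_div_cosh]
  rw [hfun] at h
  refine h.congr_deriv ?_
  have h1 := Real.cosh_sq_sub_sinh_sq x
  rw [Real.tanh_eq_sinh_div_cosh]
  field_simp

lemma continuous_tanh' : Continuous Real.tanh :=
  continuous_iff_continuousAt.mpr fun x => (tanh_hasDerivAt x).continuousAt

/-- The ODE `16 γ̇_z + γ² − 16 γ_z² = 0`, `γ_z(0) = 0`, with constant `γ > 0`, has the unique
solution `γ_z(t) = −(γ/4) tanh(γt/4)` on `[0,∞)`; moreover this solution satisfies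
`γ + 4γ_z(t) − γ·exp(−(1/4)∫₀ᵗ (γ − 4γ_z(s)) ds) = 0` for all `t ≥ 0`. -/
theorem stmt19 (γ : ℝ) (hγ : 0 < γ) (f : ℝ → ℝ) (hf : Differentiable ℝ f)
    (hode : ∀ t, 0 ≤ t → 16 * deriv f t + γ ^ 2 - 16 * (f t) ^ 2 = 0)
    (h0 : f 0 = 0) :
    (∀ t, 0 ≤ t → f t = -(γ / 4) * Real.tanh (γ * t / 4)) ∧
    (∀ t, 0 ≤ t →
      γ + 4 * (-(γ / 4) * Real.tanh (γ * t / 4))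
        - γ * Real.exp (-(1 / 4) *
            ∫ s in (0 : ℝ)..t, (γ - 4 * (-(γ / 4) * Real.tanh (γ * s / 4)))) = 0) := by
  set sol : ℝ → ℝ := fun t => -(γ / 4) * Real.tanh (γ * t / 4) with hsoldef
  have harg : ∀ t : ℝ, HasDerivAt (fun s : ℝ => γ * s / 4) (γ / 4) t := by
    intro t
    simpa using ((hasDerivAt_id t).const_mul γ).div_const 4
  have hsol : ∀ t : ℝ, HasDerivAt sol
      (-(γ ^ 2 / 16) * (1 - Real.tanh (γ * t / 4) ^ 2)) t := by
    intro t
    have := ((tanh_hasDerivAt (γ * t / 4)).comp t (harg t)).const_mul (-(γ / 4))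
    refine this.congr_deriv ?_
    ring
  have hsolC : Continuous sol := by
    apply Continuous.mul continuous_const
    exact continuous_tanh'.comp (by continuity)
  have hsol0 : sol 0 = 0 := by simp [hsoldef]
  constructor
  · -- uniqueness via integrating factor
    intro T hT
    set u : ℝ → ℝ := fun t => f t + sol t with hudef
    have huC : Continuous u := hf.continuous.add hsolC
    set I : ℝ → ℝ := fun t => ∫ s in (0:ℝ)..t, u s with hIdef
    have hI : ∀ t : ℝ, HasDerivAt I (u t) t := by
      intro t
      exact intervalIntegral.integral_hasDerivAt_right
        (huC.intervalIntegrable 0 t) (huC.stronglyMeasurableAtFilter _ _)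
        huC.continuousAt
    set φ : ℝ → ℝ := fun t => (f t - sol t) * Real.exp (-I t) with hφdef
    have hφderiv : ∀ t, 0 ≤ t → HasDerivAt φ 0 t := by
      intro t ht
      have hft : HasDerivAt f (deriv f t) t := (hf t).hasDerivAt
      have h1 : HasDerivAt (fun s => f s - sol s) (deriv f t - (-(γ ^ 2 / 16) * (1 - Real.tanh (γ * t / 4) ^ 2))) t := hft.sub (hsol t)
      have h2 : HasDerivAt (fun s => Real.exp (-I s)) (-(u t) * Real.exp (-I t)) t := by
        have := ((hI t).neg).exp
        simpa [mul_comm] using this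
      have h3 := h1.mul h2
      refine h3.congr_deriv ?_
      have hode' := hode t ht
      have hderiv : deriv f t = (f t) ^ 2 - γ ^ 2 / 16 := by linarith
      have hsolval : sol t = -(γ / 4) * Real.tanh (γ * t / 4) := rfl
      rw [hderiv, hsolval, hudef]
      simp only [hsolval]
      ring_nf
    have hφ0 : φ 0 = 0 := by simp [hφdef, h0, hsol0]
    have hconst : φ T = φ 0 := by
      rcases eq_or_lt_of_le hT with h | h
      · rw [← h]
      · have := constant_of_has_deriv_right_zero (f := φ) (a := 0) (b := T)
          (by
            apply Continuous.continuousOn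
            exact ((hf.continuous.sub hsolC).mul
              ((intervalIntegral.continuous_primitive (fun a b => huC.intervalIntegrable a b) 0).neg.rexp))) 
          (fun x hx => ((hφderiv x hx.1).hasDerivWithinAt))
        exact this T ⟨hT, le_refl T⟩
    rw [hφ0] at hconst
    have := mul_eq_zero.mp hconst
    rcases this with h | h
    · exact sub_eq_zero.mp h
    · exact absurd h (Real.exp_ne_zero _)
  · -- integral identity
    intro t ht
    have hint : (∫ s in (0:ℝ)..t, (γ - 4 * (-(γ / 4) * Real.tanh (γ * s / 4))))
        = γ * t + 4 * Real.log (Real.cosh (γ * t / 4)) := by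
      have hF : ∀ s ∈ Set.uIcc (0:ℝ) t, HasDerivAt
          (fun s => γ * s + 4 * Real.log (Real.cosh (γ * s / 4)))
          (γ - 4 * (-(γ / 4) * Real.tanh (γ * s / 4))) s := by
        intro s _
        have hcosh : HasDerivAt (fun s : ℝ => Real.cosh (γ * s / 4))
            (Real.sinh (γ * s / 4) * (γ / 4)) s :=
          by have := (Real.hasDerivAt_cosh (γ * s / 4)).comp s (harg s); exact this
        have hlog : HasDerivAt (fun s : ℝ => Real.log (Real.cosh (γ * s / 4)))
            ((Real.cosh (γ * s / 4))⁻¹ * (Real.sinh (γ * s / 4) * (γ / 4))) s :=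
          by have := (Real.hasDerivAt_log (Real.cosh_pos (γ * s / 4)).ne').comp s hcosh; exact this
        have := ((hasDerivAt_id s).const_mul γ).add (hlog.const_mul 4)
        refine this.congr_deriv ?_
        rw [Real.tanh_eq_sinh_div_cosh]
        field_simp
        ring
      have hcont : Continuous (fun s : ℝ => γ - 4 * (-(γ / 4) * Real.tanh (γ * s / 4))) := by
        apply Continuous.sub continuous_const
        exact continuous_const.mul (continuous_const.mul (continuous_tanh'.comp (by continuity)))
      rw [intervalIntegral.integral_eq_sub_of_hasDerivAt hF (hcont.intervalIntegrable 0 t)]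
      simp
    rw [hint]
    have hx : Real.exp (-(1/4) * (γ * t + 4 * Real.log (Real.cosh (γ * t / 4))))
        = Real.exp (-(γ * t / 4)) / Real.cosh (γ * t / 4) := by
      have hel : Real.exp (-Real.log (Real.cosh (γ * t / 4))) = (Real.cosh (γ * t / 4))⁻¹ := by
        rw [Real.exp_neg, Real.exp_log (Real.cosh_pos _)]
      rw [show -(1/4 : ℝ) * (γ * t + 4 * Real.log (Real.cosh (γ * t / 4)))
          = -(γ * t / 4) + (- Real.log (Real.cosh (γ * t / 4))) by ring,
        Real.exp_add, hel]
      ring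
    rw [hx]
    have hc := (Real.cosh_pos (γ * t / 4)).ne'
    have hcs := Real.cosh_sub_sinh (γ * t / 4)
    rw [Real.tanh_eq_sinh_div_cosh, ← hcs]
    have hcs2 : Real.cosh (γ * t / 4) - Real.sinh (γ * t / 4) = Real.exp (-(γ * t) / 4) := by
      rw [show (-(γ * t) / 4 : ℝ) = -(γ * t / 4) by ring]; exact hcs
    field_simp
    ring
end
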